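/- arXiv:2302.04229 — 3 statements merged into one kernel-verified Lean document; each statement's English description precedes it below -/
import Mathlib

section
/- Let k ≥ 1 and let P, P' be strings of length at least 42k³ such that P[0..21k³) = P'[0..21k³) and P[|P|−21k³..|P|) = P'[|P'|−21k³..|P'|), and both of these shared prefix and suffix avoid k-periodicity. Then P and P' are ed^w_{≤k}-equivalent for every normalized weight function w. -/
variable {σ : Type*}

/-- A weight function: nonnegative with `w a a = 0`. -/
def IsWeight (w : Option σ → Option σ → ℝ) : Prop :=
  (∀ a b, 0 ≤ w a b) ∧ (∀ a, w a a = 0)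

/-- A quasimetric: a weight function satisfying the triangle inequality. -/
def Quasimetric (w : Option σ → Option σ → ℝ) : Prop :=
  IsWeight w ∧ ∀ a b c, w a c ≤ w a b + w b c

/-- A normalized weight function: `w a b ≥ 1` whenever `a ≠ b`. -/
def Normalized (w : Option σ → Option σ → ℝ) : Prop :=
  IsWeight w ∧ ∀ a b, a ≠ b → 1 ≤ w a b

/-- `EdAux w X Y c` holds iff some alignment of `X` onto `Y` has total cost `c`,
where deleting `a` costs `w (some a) none`, inserting `b` costs `w none (some b)`, and
aligning `a` to `b` costs `w (some a) (some b)`. -/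
inductive EdAux (w : Option σ → Option σ → ℝ) : List σ → List σ → ℝ → Prop
  | nil : EdAux w [] [] 0
  | del {X Y : List σ} {c : ℝ} (a : σ) :
      EdAux w X Y c → EdAux w (a :: X) Y (w (some a) none + c)
  | ins {X Y : List σ} {c : ℝ} (b : σ) :
      EdAux w X Y c → EdAux w X (b :: Y) (w none (some b) + c)
  | sub {X Y : List σ} {c : ℝ} (a b : σ) :
      EdAux w X Y c → EdAux w (a :: X) (b :: Y) (w (some a) (some b) + c)

/-- Weighted edit distance: the minimum cost over all alignments. -/
noncomputable def ed (w : Option σ → Option σ → ℝ) (X Y : List σ) : ℝ :=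
  sInf {c | EdAux w X Y c}

/-- Weighted edit distance capped at threshold `k`: equals `ed w X Y` if that is `≤ k`,
and `∞` otherwise. -/
noncomputable def edK (w : Option σ → Option σ → ℝ) (k : ℝ) (X Y : List σ) : EReal :=
  if ed w X Y ≤ k then ((ed w X Y : ℝ) : EReal) else ⊤

open scoped Classical in
/-- The discrete weight function; `ed discreteW` is the unweighted (Levenshtein) distance. -/
noncomputable def discreteW : Option σ → Option σ → ℝ :=
  fun a b => if a = b then 0 else 1

/-- The fragment `X[i..j)`. -/
def seg (X : List σ) (i j : ℕ) : List σ := (X.drop i).take (j - i)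

/-- `Q^e`: concatenation of `e` copies of `Q`. -/
def listPow (Q : List σ) (e : ℕ) : List σ := (List.replicate e Q).flatten

/-- `P` occurs in `X` at position `p`. -/
def OccursAt (P X : List σ) (p : ℕ) : Prop :=
  p + P.length ≤ X.length ∧ seg X p (p + P.length) = P

/-- A primitive string: nonempty and not a proper power. -/
def Primitive (Q : List σ) : Prop :=
  Q ≠ [] ∧ ∀ (R : List σ) (m : ℕ), 2 ≤ m → Q ≠ listPow R m

/-- `S` avoids `k`-periodicity: it contains no substring `Q^{4k+1}` with `|Q| ∈ [1..2k]`. -/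
def AvoidsPeriodicity (k : ℕ) (S : List σ) : Prop :=
  ∀ Q : List σ, 1 ≤ Q.length → Q.length ≤ 2 * k → ¬ listPow Q (4 * k + 1) <:+: S

/-- `P` and `P'` are `ed^w_{≤k}`-equivalent: replacing `k`-synchronized occurrences of `P`
in `X` and `Y` by `P'` preserves the capped weighted edit distance. -/
def EdEquiv (w : Option σ → Option σ → ℝ) (k : ℕ) (P P' : List σ) : Prop :=
  ∀ (X Y : List σ) (pX pY : ℕ),
    OccursAt P X pX → OccursAt P Y pY → |(pX : ℤ) - (pY : ℤ)| ≤ (k : ℤ) →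
    edK w (k : ℝ) X Y =
      edK w (k : ℝ) (X.take pX ++ P' ++ X.drop (pX + P.length))
        (Y.take pY ++ P' ++ Y.drop (pY + P.length))

/-! An optimal alignment of `X` onto `Y` of cost at most `k` makes at most `k` operations other
than matches, so by pigeonhole every stretch of `21k³` source letters contains a run of
`2k(4k+1)` consecutive matches. Inside the shared prefix `A`, such a run pairs a factor of `A`
in `X` with a copy in `Y` shifted by at most `2k`; a nonzero shift `q` would make the factor
`q`-periodic, producing `Q^{4k+1}` with `|Q| = q` inside `A`. So the alignment passes through a
common position of the two occurrences of `A`, and likewise of the shared suffix `S`. Between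
these two points it can be replaced by the identity alignment of the new middle part, at no
cost, and the symmetric argument gives the reverse inequality. -/

section Words

variable {α : Type*}

private lemma exists_long_run_append (p : α → Prop) [DecidablePred p] (l : List α) :
    ∀ pre : List α, (∀ x ∈ pre, p x) → ∃ l₁ r l₂, pre ++ l = l₁ ++ r ++ l₂ ∧ (∀ x ∈ r, p x) ∧
      pre.length + l.length ≤ (l.countP (¬ p ·) + 1) * r.length + l.countP (¬ p ·) := by
  induction l with
  | nil => exact fun pre hpre => ⟨[], pre, [], by simp, hpre, by simp⟩
  | cons a t ih =>
    intro pre hpre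
    by_cases ha : p a
    · have hc : (a :: t).countP (¬ p ·) = t.countP (¬ p ·) := by simp [ha]
      obtain ⟨l₁, r, l₂, h, hr, hlen⟩ :=
        ih (pre ++ [a]) (by simpa [or_imp, forall_and] using ⟨hpre, ha⟩)
      refine ⟨l₁, r, l₂, by simpa using h, hr, ?_⟩
      simp only [hc, List.length_append, List.length_cons, List.length_nil] at hlen ⊢
      omega
    · have hc : (a :: t).countP (¬ p ·) = t.countP (¬ p ·) + 1 := by simp [ha]
      obtain ⟨l₁, r, l₂, rfl, hr, hlen⟩ := ih [] (by simp)
      rw [hc]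
      simp only [List.length_nil, zero_add] at hlen
      rcases le_total pre.length r.length with hpr | hrp
      · refine ⟨pre ++ a :: l₁, r, l₂, by simp, hr, ?_⟩
        simp only [List.length_cons]
        nlinarith
      · refine ⟨[], pre, a :: (l₁ ++ r ++ l₂), by simp, hpre, ?_⟩
        simp only [List.length_cons]
        nlinarith

lemma exists_long_run (p : α → Prop) [DecidablePred p] (l : List α) :
    ∃ l₁ r l₂, l = l₁ ++ r ++ l₂ ∧ (∀ x ∈ r, p x) ∧
      l.length ≤ (l.countP (¬ p ·) + 1) * r.length + l.countP (¬ p ·) := by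
  simpa using exists_long_run_append p l [] (by simp)

lemma listPow_take_prefix_of_drop_prefix {M : List α} {q : ℕ} (h : M.drop q <+: M) :
    ∀ m, m * q ≤ M.length → listPow (M.take q) m <+: M := by
  intro m
  induction m generalizing M with
  | zero => simp [listPow]
  | succ m ih =>
    intro hm
    have hpow : listPow (M.take q) (m + 1) = M.take q ++ listPow (M.take q) m := by
      simp [listPow, List.replicate_succ]
    suffices listPow (M.take q) m <+: M.drop q by
      simpa [hpow] using (List.prefix_append_right_inj (M.take q)).2 this
    rcases m with _ | m
    · simp [listPow]
    have hlen : (m + 1) * q + q ≤ M.length := by rwa [← Nat.succ_mul]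
    have hq : q ≤ (m + 1) * q := Nat.le_mul_of_pos_left q m.succ_pos
    have htake : (M.drop q).take q = M.take q :=
      (h.take q).eq_of_length (by simp only [List.length_take, List.length_drop]; omega)
    simpa [htake] using ih (h.drop q) (by rw [List.length_drop]; omega)

lemma List.exists_eq_take_append_append_drop {l : List α} {n m : ℕ} (h : n + m ≤ l.length) :
    ∃ M, l = l.take n ++ M ++ l.drop (l.length - m) := by
  refine ⟨(l.drop n).take (l.length - m - n), ?_⟩
  conv_lhs =>
    rw [← List.take_append_drop n l, ← List.take_append_drop (l.length - m - n) (l.drop n)]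
  rw [List.drop_drop, List.append_assoc, Nat.add_sub_cancel' (by omega)]

lemma List.take_append_append_drop_replace (L P P' R : List α) :
    (L ++ P ++ R).take L.length ++ P' ++ (L ++ P ++ R).drop (L.length + P.length) =
      L ++ P' ++ R := by
  rw [List.append_assoc L P R, List.take_left, ← List.length_append, ← List.append_assoc,
    List.drop_left]

end Words

lemma OccursAt.exists_eq_append {P X : List σ} {p : ℕ} (h : OccursAt P X p) :
    ∃ L R, X = L ++ P ++ R ∧ L.length = p := by
  refine ⟨X.take p, X.drop (p + P.length), ?_, List.length_take_of_le (by have := h.1; omega)⟩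
  have h2 := h.2
  simp only [seg, Nat.add_sub_cancel_left] at h2
  conv_lhs => rw [← List.take_append_drop p X, ← List.take_append_drop P.length (X.drop p), h2]
  rw [List.drop_drop, List.append_assoc]

namespace AvoidsPeriodicity

variable {k : ℕ} {A M : List σ}

lemma not_drop_prefix (hA : AvoidsPeriodicity k A) (hMA : M <:+: A) {q : ℕ} (hq : 1 ≤ q)
    (hqk : q ≤ 2 * k) (hM : (4 * k + 1) * q ≤ M.length) : ¬ M.drop q <+: M := fun h => by
  have : q ≤ M.length := le_trans (Nat.le_mul_of_pos_left q (Nat.succ_pos _)) hM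
  exact hA (M.take q) (by rw [List.length_take]; omega) (by rw [List.length_take]; omega)
    ((listPow_take_prefix_of_drop_prefix h _ hM).isInfix.trans hMA)

/-- A nonzero offset `q = |s - t|` between the two occurrences of `M` would make `M`
`q`-periodic. -/
lemma eq_of_drop_eq (hA : AvoidsPeriodicity k A) {Y V R : List σ} {a s t : ℕ}
    (hM : M <+: A.drop a) (hMlen : 2 * k * (4 * k + 1) ≤ M.length)
    (hs : Y.drop s = M ++ V) (ht : Y.drop t = A.drop a ++ R)
    (hst : s ≤ t + 2 * k) (hts : t ≤ s + 2 * k) : s = t := by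
  have hMA : M <:+: A := hM.isInfix.trans (List.drop_suffix a A).isInfix
  have hMR : M <+: A.drop a ++ R := hM.trans (List.prefix_append _ _)
  have hperiodic : ∀ q, 1 ≤ q → q ≤ 2 * k → ¬ M.drop q <+: M := fun q h1 h2 =>
    hA.not_drop_prefix hMA h1 h2 (by nlinarith)
  have h2k : 2 * k ≤ M.length := le_trans (Nat.le_mul_of_pos_right _ (Nat.succ_pos _)) hMlen
  rcases lt_trichotomy s t with h | h | h
  · obtain ⟨q, rfl⟩ := Nat.exists_eq_add_of_le h.le
    refine absurd ?_ (hperiodic q (by omega) (by omega))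
    have hYt : Y.drop (s + q) = M.drop q ++ V := by
      rw [← List.drop_drop, hs, List.drop_append_of_le_length (by omega)]
    exact List.prefix_of_prefix_length_le (List.prefix_append _ V) (by rwa [← hYt, ht])
      (by simp)
  · exact h
  · obtain ⟨q, rfl⟩ := Nat.exists_eq_add_of_le h.le
    refine absurd ?_ (hperiodic q (by omega) (by omega))
    have hYs : Y.drop (t + q) = (A.drop a ++ R).drop q := by rw [← List.drop_drop, ht]
    exact List.prefix_of_prefix_length_le (by rw [← hs, hYs]; exact hMR.drop _)
      (List.prefix_append _ V) (by simp)

end AvoidsPeriodicity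

inductive EditOp (σ : Type*) where
  | del (a : σ)
  | ins (b : σ)
  | sub (a b : σ)

namespace EditOp

def src : EditOp σ → List σ
  | del a => [a]
  | ins _ => []
  | sub a _ => [a]

def tgt : EditOp σ → List σ
  | del _ => []
  | ins b => [b]
  | sub _ b => [b]

def cost (w : Option σ → Option σ → ℝ) : EditOp σ → ℝ
  | del a => w (some a) none
  | ins b => w none (some b)
  | sub a b => w (some a) (some b)

def IsMatch : EditOp σ → Prop
  | sub a b => a = b
  | _ => False

lemma length_src_le_one (o : EditOp σ) : o.src.length ≤ 1 := by
  cases o <;> simp [src]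

open scoped Classical in
lemma length_src_le (o : EditOp σ) :
    o.src.length ≤ o.tgt.length + if o.IsMatch then 0 else 1 := by
  cases o <;> simp [src, tgt, IsMatch]

open scoped Classical in
lemma length_tgt_le (o : EditOp σ) :
    o.tgt.length ≤ o.src.length + if o.IsMatch then 0 else 1 := by
  cases o <;> simp [src, tgt, IsMatch]

end EditOp

/-- The alignments behind `EdAux`, as explicit lists of operations. -/
abbrev EditScript (σ : Type*) := List (EditOp σ)

namespace EditScript

open scoped Classical

variable {w : Option σ → Option σ → ℝ}

def src (l : EditScript σ) : List σ := l.flatMap EditOp.src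

def tgt (l : EditScript σ) : List σ := l.flatMap EditOp.tgt

def cost (w : Option σ → Option σ → ℝ) (l : EditScript σ) : ℝ := (l.map (EditOp.cost w)).sum

noncomputable def mismatches (l : EditScript σ) : ℕ := l.countP fun o => ¬ o.IsMatch

def matchAlign (M : List σ) : EditScript σ := M.map fun a => .sub a a

@[simp] lemma src_nil : src ([] : EditScript σ) = [] := rfl
@[simp] lemma tgt_nil : tgt ([] : EditScript σ) = [] := rfl
@[simp] lemma cost_nil : cost w [] = 0 := rfl
@[simp] lemma mismatches_nil : mismatches ([] : EditScript σ) = 0 := rfl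

@[simp] lemma src_cons (o : EditOp σ) (l : EditScript σ) : src (o :: l) = o.src ++ src l :=
  List.flatMap_cons
@[simp] lemma tgt_cons (o : EditOp σ) (l : EditScript σ) : tgt (o :: l) = o.tgt ++ tgt l :=
  List.flatMap_cons
@[simp] lemma cost_cons (o : EditOp σ) (l : EditScript σ) :
    cost w (o :: l) = o.cost w + cost w l := by
  simp [cost]
lemma mismatches_cons (o : EditOp σ) (l : EditScript σ) :
    mismatches (o :: l) = mismatches l + if o.IsMatch then 0 else 1 := by
  by_cases h : o.IsMatch <;> simp [mismatches, h]

@[simp] lemma src_append (l₁ l₂ : EditScript σ) : src (l₁ ++ l₂) = src l₁ ++ src l₂ :=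
  List.flatMap_append
@[simp] lemma tgt_append (l₁ l₂ : EditScript σ) : tgt (l₁ ++ l₂) = tgt l₁ ++ tgt l₂ :=
  List.flatMap_append
@[simp] lemma cost_append (l₁ l₂ : EditScript σ) :
    cost w (l₁ ++ l₂) = cost w l₁ + cost w l₂ := by
  simp [cost]
@[simp] lemma mismatches_append (l₁ l₂ : EditScript σ) :
    mismatches (l₁ ++ l₂) = mismatches l₁ + mismatches l₂ :=
  List.countP_append

@[simp] lemma src_matchAlign (M : List σ) : src (matchAlign M) = M := by
  induction M <;> simp_all [matchAlign, EditOp.src]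
@[simp] lemma tgt_matchAlign (M : List σ) : tgt (matchAlign M) = M := by
  induction M <;> simp_all [matchAlign, EditOp.tgt]
lemma cost_matchAlign (hw : IsWeight w) (M : List σ) : cost w (matchAlign M) = 0 := by
  induction M <;> simp_all [matchAlign, EditOp.cost, hw.2]

lemma exists_eq_matchAlign {m : EditScript σ} (hm : ∀ o ∈ m, o.IsMatch) :
    ∃ M, m = matchAlign M := by
  induction m with
  | nil => exact ⟨[], rfl⟩
  | cons o m ih =>
    obtain ⟨M, rfl⟩ := ih fun o' ho' => hm o' (List.mem_cons_of_mem o ho')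
    have ho := hm o List.mem_cons_self
    cases o with
    | sub a b => exact ⟨a :: M, by cases ho; rfl⟩
    | _ => exact ho.elim

lemma cost_nonneg (hw : IsWeight w) (l : EditScript σ) : 0 ≤ cost w l := by
  induction l with
  | nil => simp
  | cons o l ih =>
    have : 0 ≤ o.cost w := by cases o <;> exact hw.1 _ _
    simp only [cost_cons]
    linarith

lemma mismatches_le_cost (hw : Normalized w) (l : EditScript σ) :
    (mismatches l : ℝ) ≤ cost w l := by
  induction l with
  | nil => simp
  | cons o l ih =>
    have ho : ((if o.IsMatch then 0 else 1 : ℕ) : ℝ) ≤ o.cost w := by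
      cases o with
      | del a => simpa [EditOp.IsMatch, EditOp.cost] using hw.2 (some a) none (by simp)
      | ins b => simpa [EditOp.IsMatch, EditOp.cost] using hw.2 none (some b) (by simp)
      | sub a b =>
        by_cases hab : a = b
        · simp [EditOp.IsMatch, EditOp.cost, hab, hw.1.2]
        · simpa [EditOp.IsMatch, EditOp.cost, hab] using hw.2 (some a) (some b) (by simpa)
    rw [mismatches_cons, cost_cons, Nat.cast_add]
    linarith

lemma length_src_le_length (l : EditScript σ) : (src l).length ≤ l.length := by
  induction l with
  | nil => simp
  | cons o l ih =>
    simp only [src_cons, List.length_append, List.length_cons]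
    linarith [o.length_src_le_one]

lemma length_src_le (l : EditScript σ) : (src l).length ≤ (tgt l).length + mismatches l := by
  induction l with
  | nil => simp
  | cons o l ih =>
    simp only [src_cons, tgt_cons, mismatches_cons, List.length_append]
    linarith [o.length_src_le]

lemma length_tgt_le (l : EditScript σ) : (tgt l).length ≤ (src l).length + mismatches l := by
  induction l with
  | nil => simp
  | cons o l ih =>
    simp only [src_cons, tgt_cons, mismatches_cons, List.length_append]
    linarith [o.length_tgt_le]

lemma exists_eq_append_length_src (l : EditScript σ) {n : ℕ} (hn : n ≤ (src l).length) :
    ∃ l₁ l₂, l = l₁ ++ l₂ ∧ (src l₁).length = n := by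
  induction l generalizing n with
  | nil => exact ⟨[], [], rfl, by simp_all⟩
  | cons o l ih =>
    rcases Nat.eq_zero_or_pos n with rfl | hn0
    · exact ⟨[], o :: l, rfl, rfl⟩
    have := o.length_src_le_one
    obtain ⟨l₁, l₂, rfl, h₁⟩ :=
      ih (n := n - o.src.length) (by simp only [src_cons, List.length_append] at hn; omega)
    exact ⟨o :: l₁, l₂, rfl, by simp only [src_cons, List.length_append]; omega⟩

lemma edAux_cost (l : EditScript σ) : EdAux w (src l) (tgt l) (cost w l) := by
  induction l with
  | nil => exact EdAux.nil
  | cons o l ih =>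
    cases o with
    | del a => exact EdAux.del a ih
    | ins b => exact EdAux.ins b ih
    | sub a b => exact EdAux.sub a b ih

lemma exists_of_edAux {X Y : List σ} {c : ℝ} (h : EdAux w X Y c) :
    ∃ l : EditScript σ, src l = X ∧ tgt l = Y ∧ cost w l = c := by
  induction h with
  | nil => exact ⟨[], rfl, rfl, rfl⟩
  | del a _ ih =>
    obtain ⟨l, rfl, rfl, rfl⟩ := ih
    exact ⟨.del a :: l, rfl, rfl, rfl⟩
  | ins b _ ih =>
    obtain ⟨l, rfl, rfl, rfl⟩ := ih
    exact ⟨.ins b :: l, rfl, rfl, rfl⟩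
  | sub a b _ ih =>
    obtain ⟨l, rfl, rfl, rfl⟩ := ih
    exact ⟨.sub a b :: l, rfl, rfl, rfl⟩

end EditScript

section EditDistance

open EditScript

variable {w : Option σ → Option σ → ℝ}

lemma finite_setOf_edAux (w : Option σ → Option σ → ℝ) (X Y : List σ) :
    {c | EdAux w X Y c}.Finite := by
  induction X generalizing Y with
  | nil =>
    induction Y with
    | nil => exact (Set.finite_singleton 0).subset fun c h => by cases h; rfl
    | cons b Y ih =>
      refine (ih.image (w none (some b) + ·)).subset fun c h => ?_
      cases h with
      | ins _ h => exact ⟨_, h, rfl⟩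
  | cons a X ihX =>
    induction Y with
    | nil =>
      refine ((ihX []).image (w (some a) none + ·)).subset fun c h => ?_
      cases h with
      | del _ h => exact ⟨_, h, rfl⟩
    | cons b Y ihY =>
      refine ((((ihX (b :: Y)).image (w (some a) none + ·)).union
        (ihY.image (w none (some b) + ·))).union
        ((ihX Y).image (w (some a) (some b) + ·))).subset fun c h => ?_
      cases h with
      | del _ h => exact .inl (.inl ⟨_, h, rfl⟩)
      | ins _ h => exact .inl (.inr ⟨_, h, rfl⟩)
      | sub _ _ h => exact .inr ⟨_, h, rfl⟩

lemma ed_le_cost (l : EditScript σ) : ed w (src l) (tgt l) ≤ cost w l :=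
  csInf_le (finite_setOf_edAux w _ _).bddBelow (edAux_cost l)

lemma exists_editScript_cost_eq_ed (w : Option σ → Option σ → ℝ) (X Y : List σ) :
    ∃ l : EditScript σ, src l = X ∧ tgt l = Y ∧ cost w l = ed w X Y := by
  have hne : {c | EdAux w X Y c}.Nonempty := by
    induction X with
    | nil =>
      induction Y with
      | nil => exact ⟨0, .nil⟩
      | cons b Y ih => obtain ⟨c, h⟩ := ih; exact ⟨_, .ins b h⟩
    | cons a X ih => obtain ⟨c, h⟩ := ih; exact ⟨_, .del a h⟩
  exact exists_of_edAux (hne.csInf_mem (finite_setOf_edAux w X Y))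

lemma edK_eq_of_le {k : ℝ} {X Y X' Y' : List σ}
    (h : ed w X Y ≤ k → ed w X' Y' ≤ ed w X Y) (h' : ed w X' Y' ≤ k → ed w X Y ≤ ed w X' Y') :
    edK w k X Y = edK w k X' Y' := by
  unfold edK
  by_cases hXY : ed w X Y ≤ k
  · have hle := h hXY
    rw [if_pos hXY, if_pos (hle.trans hXY), le_antisymm hle (h' (hle.trans hXY))]
  · have hX'Y' : ¬ ed w X' Y' ≤ k := fun hk => hXY ((h' hk).trans hk)
    rw [if_neg hXY, if_neg hX'Y']

end EditDistance

namespace EditScript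

open scoped Classical

lemma exists_matchAlign_run {k B : ℕ} (l : EditScript σ) (hmis : mismatches l ≤ k) {x W : ℕ}
    (h : x + W ≤ (src l).length) (hW : (k + 1) * B ≤ W) :
    ∃ u M v, l = u ++ matchAlign M ++ v ∧ x ≤ (src u).length ∧
      (src u).length + M.length ≤ x + W ∧ B ≤ M.length := by
  obtain ⟨l₁, l₂, rfl, h₁⟩ := exists_eq_append_length_src l (n := x) (by omega)
  obtain ⟨v, z, rfl, hv⟩ := exists_eq_append_length_src l₂ (n := W)
    (by simp only [src_append, List.length_append] at h; omega)
  have hWv : W ≤ v.length := hv ▸ length_src_le_length v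
  obtain ⟨m₁, m, m₃, hvm, hm, hrun⟩ := exists_long_run EditOp.IsMatch v
  obtain ⟨M, rfl⟩ := exists_eq_matchAlign hm
  have hrun' : v.length ≤ (mismatches v + 1) * M.length + mismatches v := by
    rwa [show (matchAlign M).length = M.length from List.length_map _] at hrun
  have hmis_v : mismatches v ≤ k := by
    simp only [mismatches_append] at hmis; omega
  have hsrc : (src v).length = (src m₁).length + M.length + (src m₃).length := by
    simp only [hvm, src_append, src_matchAlign, List.length_append]
  refine ⟨l₁ ++ m₁, M, m₃ ++ z, by simp [hvm],
    by simp only [src_append, List.length_append]; omega,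
    by simp only [src_append, List.length_append]; omega, ?_⟩
  by_contra! hlt
  have : (mismatches v + 1) * (M.length + 1) ≤ (k + 1) * B := Nat.mul_le_mul (by omega) hlt
  nlinarith

/-- The pigeonhole run of `2k(4k+1)` matches inside `A` is unshifted by `eq_of_drop_eq`. -/
lemma exists_sync_split {k : ℕ} {A LX LY RX RY : List σ} (hA : AvoidsPeriodicity k A)
    (hAlen : (k + 1) * (2 * k * (4 * k + 1)) ≤ A.length)
    (hL : |(LX.length : ℤ) - LY.length| ≤ k) {l : EditScript σ}
    (hsrc : src l = LX ++ A ++ RX) (htgt : tgt l = LY ++ A ++ RY) (hmis : mismatches l ≤ k) :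
    ∃ l₁ l₂ i, l = l₁ ++ l₂ ∧ src l₁ = LX ++ A.take i ∧ tgt l₁ = LY ++ A.take i ∧
      src l₂ = A.drop i ++ RX ∧ tgt l₂ = A.drop i ++ RY := by
  obtain ⟨u, M, v, rfl, hxu, huM, hMlen⟩ :=
    exists_matchAlign_run l hmis (x := LX.length) (W := A.length) (by simp [hsrc]) hAlen
  set a := (src u).length - LX.length
  have hX : src u ++ (M ++ src v) = (LX ++ A.take a) ++ (A.drop a ++ RX) := by
    rw [← List.take_append_drop a A] at hsrc
    simpa only [src_append, src_matchAlign, List.append_assoc] using hsrc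
  obtain ⟨hu_src, hv_src⟩ :=
    List.append_inj hX (by simp only [List.length_append, List.length_take]; omega)
  have hMA : M <+: A.drop a :=
    List.prefix_of_prefix_length_le (hv_src ▸ List.prefix_append M (src v))
      (List.prefix_append _ RX) (by rw [List.length_drop]; omega)
  have hshift : (tgt u).length = LY.length + a := by
    have := length_src_le u
    have := length_tgt_le u
    have : mismatches u ≤ k := by simp only [mismatches_append] at hmis; omega
    obtain ⟨h₁, h₂⟩ := abs_le.mp hL
    refine hA.eq_of_drop_eq (Y := LY ++ A ++ RY) hMA hMlen (V := tgt v) (R := RY) ?_ ?_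
      (by omega) (by omega)
    · rw [← htgt]
      simp
    · rw [List.append_assoc, ← List.drop_drop, List.drop_left' rfl,
        List.drop_append_of_le_length (by omega)]
  have hY : tgt u ++ (M ++ tgt v) = (LY ++ A.take a) ++ (A.drop a ++ RY) := by
    rw [← List.take_append_drop a A] at htgt
    simpa only [tgt_append, tgt_matchAlign, List.append_assoc] using htgt
  obtain ⟨hu_tgt, hv_tgt⟩ :=
    List.append_inj hY (by simp only [List.length_append, List.length_take]; omega)
  exact ⟨u, matchAlign M ++ v, a, by simp, hu_src, hu_tgt, by simpa using hv_src,
    by simpa using hv_tgt⟩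

end EditScript

section Equivalence

open EditScript

variable {w : Option σ → Option σ → ℝ}

/-- Cut an optimal script at synchronization points inside `A` and inside `S`, and replace the
part in between by free matches of the new middle. -/
lemma ed_replace_le (hw : Normalized w) {k : ℕ} {A S M M' P P' LX LY RX RY : List σ}
    (hA : AvoidsPeriodicity k A) (hS : AvoidsPeriodicity k S)
    (hAlen : (k + 1) * (2 * k * (4 * k + 1)) ≤ A.length)
    (hSlen : (k + 1) * (2 * k * (4 * k + 1)) ≤ S.length)
    (hP : P = A ++ M ++ S) (hP' : P' = A ++ M' ++ S) (hL : |(LX.length : ℤ) - LY.length| ≤ k)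
    (hed : ed w (LX ++ P ++ RX) (LY ++ P ++ RY) ≤ k) :
    ed w (LX ++ P' ++ RX) (LY ++ P' ++ RY) ≤ ed w (LX ++ P ++ RX) (LY ++ P ++ RY) := by
  subst hP hP'
  obtain ⟨l, hsrc, htgt, hcost⟩ := exists_editScript_cost_eq_ed w
    (LX ++ (A ++ M ++ S) ++ RX) (LY ++ (A ++ M ++ S) ++ RY)
  have hmis : mismatches l ≤ k := by
    exact_mod_cast (mismatches_le_cost hw l).trans (hcost ▸ hed)
  obtain ⟨l₁, l₂, i, rfl, h₁s, h₁t, h₂s, h₂t⟩ := exists_sync_split hA hAlen hL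
    (RX := M ++ S ++ RX) (RY := M ++ S ++ RY) (by simp [hsrc]) (by simp [htgt]) hmis
  obtain ⟨l₃, l₄, j, rfl, -, -, h₄s, h₄t⟩ := exists_sync_split hS hSlen
    (l := l₂) (LX := A.drop i ++ M) (LY := A.drop i ++ M) (RX := RX) (RY := RY) (by simp)
    (by simp [h₂s]) (by simp [h₂t]) (by simp only [mismatches_append] at hmis ⊢; omega)
  set l' := l₁ ++ matchAlign (A.drop i ++ M' ++ S.take j) ++ l₄
  have hs : src l' = LX ++ (A ++ M' ++ S) ++ RX := by
    simp only [l', src_append, src_matchAlign, h₁s, h₄s, List.append_assoc]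
    conv_rhs => rw [← List.take_append_drop i A, ← List.take_append_drop j S]
    simp only [List.append_assoc]
  have ht : tgt l' = LY ++ (A ++ M' ++ S) ++ RY := by
    simp only [l', tgt_append, tgt_matchAlign, h₁t, h₄t, List.append_assoc]
    conv_rhs => rw [← List.take_append_drop i A, ← List.take_append_drop j S]
    simp only [List.append_assoc]
  rw [← hcost, ← hs, ← ht]
  calc ed w (src l') (tgt l') ≤ cost w l' := ed_le_cost l'
    _ ≤ cost w (l₁ ++ (l₃ ++ l₄)) := by
      simp [l', cost_matchAlign hw.1, cost_nonneg hw.1 l₃]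

end Equivalence

theorem aperiodic_equivalence_general (k : ℕ) (P P' : List σ)
    (hlen : 42 * k ^ 3 ≤ P.length) (hlen' : 42 * k ^ 3 ≤ P'.length)
    (hpre : P.take (21 * k ^ 3) = P'.take (21 * k ^ 3))
    (hsuf : P.drop (P.length - 21 * k ^ 3) = P'.drop (P'.length - 21 * k ^ 3))
    (hpre_aper : AvoidsPeriodicity k (P.take (21 * k ^ 3)))
    (hsuf_aper : AvoidsPeriodicity k (P.drop (P.length - 21 * k ^ 3)))
    (w : Option σ → Option σ → ℝ) (hw : Normalized w) :
    EdEquiv w k P P' := by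
  have hbound : (k + 1) * (2 * k * (4 * k + 1)) ≤ 21 * k ^ 3 := by
    have hk₁ : k ≤ k ^ 2 := by nlinarith
    have hk₂ : k ^ 2 ≤ k ^ 3 := by nlinarith
    have : (k + 1) * (2 * k * (4 * k + 1)) = 8 * k ^ 3 + 10 * k ^ 2 + 2 * k := by ring
    omega
  have hA : (k + 1) * (2 * k * (4 * k + 1)) ≤ (P.take (21 * k ^ 3)).length := by
    rw [List.length_take]; omega
  have hS : (k + 1) * (2 * k * (4 * k + 1)) ≤ (P.drop (P.length - 21 * k ^ 3)).length := by
    rw [List.length_drop]; omega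
  obtain ⟨M, hP⟩ :=
    List.exists_eq_take_append_append_drop (l := P) (n := 21 * k ^ 3) (m := 21 * k ^ 3)
      (by omega)
  obtain ⟨M', hP'⟩ :=
    List.exists_eq_take_append_append_drop (l := P') (n := 21 * k ^ 3) (m := 21 * k ^ 3)
      (by omega)
  rw [← hpre, ← hsuf] at hP'
  intro X Y pX pY hX hY hd
  obtain ⟨LX, RX, rfl, rfl⟩ := hX.exists_eq_append
  obtain ⟨LY, RY, rfl, rfl⟩ := hY.exists_eq_append
  rw [List.take_append_append_drop_replace, List.take_append_append_drop_replace]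
  exact edK_eq_of_le (ed_replace_le hw hpre_aper hsuf_aper hA hS hP hP' hd)
    (ed_replace_le hw hpre_aper hsuf_aper hA hS hP' hP hd)

/-- If `P, P'` have length at least `42k³`, share their length-`21k³`
prefixes and suffixes, and these shared prefix and suffix avoid `k`-periodicity, then `P`
and `P'` are `ed^w_{≤k}`-equivalent for every normalized weight function `w`. -/
theorem aperiodic_equivalence (k : ℕ) (hk : 1 ≤ k) (P P' : List σ)
    (hlen : 42 * k ^ 3 ≤ P.length) (hlen' : 42 * k ^ 3 ≤ P'.length)
    (hpre : P.take (21 * k ^ 3) = P'.take (21 * k ^ 3))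
    (hsuf : P.drop (P.length - 21 * k ^ 3) = P'.drop (P'.length - 21 * k ^ 3))
    (hpre_aper : AvoidsPeriodicity k (P.take (21 * k ^ 3)))
    (hsuf_aper : AvoidsPeriodicity k (P.drop (P.length - 21 * k ^ 3)))
    (w : Option σ → Option σ → ℝ) (hw : Normalized w) :
    EdEquiv w k P P' :=
  aperiodic_equivalence_general k P P' hlen hlen' hpre hsuf hpre_aper hsuf_aper w hw
end

section
/- Let Q be a primitive string and q = |Q| ≤ e, and let m be the length of the longest common prefix of P[r..|P|) and P[r+q..|P|). If P[r..|P|) has a prefix of the form Q̂^{e+1} beginning at position r+q for some primitive string Q̂ with |Q̂| ≤ e, and m ≥ eq, then |Q̂| = q (and consequently the common prefix extends, a contradiction with maximality of m if the occurrence ends at position r+q+m or later). -/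
variable {σ : Type*}

/-- A function with period `p` on `[0,n)` is determined by values mod `p`. -/
lemma periodic_mod {α : Type*} (f : ℕ → α) (p n : ℕ) (hp : 0 < p)
    (h : ∀ i, i + p < n → f (i + p) = f i) :
    ∀ j, j < n → f j = f (j % p) := by
  intro j
  induction j using Nat.strong_induction_on with
  | _ j ih =>
    intro hj
    by_cases hjp : j < p
    · rw [Nat.mod_eq_of_lt hjp]
    · push_neg at hjp
      have h1 : f (j - p + p) = f (j - p) := h (j - p) (by omega)
      rw [Nat.sub_add_cancel hjp] at h1
      have h2 : f (j - p) = f ((j - p) % p) := ih (j - p) (by omega) (by omega)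
      have h3 : (j - p) % p = j % p := by
        conv_rhs => rw [show j = (j - p) + p by omega]
        rw [Nat.add_mod_right]
      rw [h1, h2, h3]

/-- Fine–Wilf periodicity lemma (strong form, with fuel `N`). -/
lemma fine_wilf_aux {α : Type*} :
    ∀ N p q n (f : ℕ → α), p + q ≤ N → 0 < p → 0 < q →
      (∀ i, i + p < n → f (i + p) = f i) →
      (∀ i, i + q < n → f (i + q) = f i) →
      p + q - Nat.gcd p q ≤ n →
      ∀ j, j < n → f j = f (j % Nat.gcd p q) := by
  intro N
  induction N with
  | zero => intro p q n f hN hp hq _ _ _; omega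
  | succ N ih =>
    intro p q n f hN hp hq hfp hfq hn j hj
    rcases lt_trichotomy p q with hpq | hpq | hpq
    · -- p < q : recurse with (p, q - p) on [0, n - p)
      have hg : Nat.gcd p (q - p) = Nat.gcd p q := Nat.gcd_sub_self_right (le_of_lt hpq)
      have hgdp : Nat.gcd p q ∣ p := Nat.gcd_dvd_left p q
      have hgdq : Nat.gcd p q ∣ q := Nat.gcd_dvd_right p q
      have hgd : Nat.gcd p q ∣ q - p := Nat.dvd_sub hgdq hgdp
      have hgle : Nat.gcd p q ≤ q - p := Nat.le_of_dvd (by omega) hgd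
      have hfq' : ∀ i, i + (q - p) < n - p → f (i + (q - p)) = f i := by
        intro i hi
        have h1 : f (i + (q - p) + p) = f (i + (q - p)) := hfp _ (by omega)
        have h2 : f (i + q) = f i := hfq i (by omega)
        have h3 : i + (q - p) + p = i + q := by omega
        rw [h3] at h1
        rw [← h1, h2]
      have hfp' : ∀ i, i + p < n - p → f (i + p) = f i := fun i hi => hfp i (by omega)
      have H : ∀ j, j < n - p → f j = f (j % Nat.gcd p q) := by
        have := ih p (q - p) (n - p) f (by omega) hp (by omega) hfp' hfq'
          (by rw [hg]; omega)
        rw [hg] at this; exact this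
      -- n ≥ 2p
      have h2p : p ≤ n - p := by omega
      have e1 : f j = f (j % p) := periodic_mod f p n hp hfp j hj
      have e2 : f (j % p) = f (j % p % Nat.gcd p q) :=
        H (j % p) (by have := Nat.mod_lt j hp; omega)
      rw [e1, e2, Nat.mod_mod_of_dvd j hgdp]
    · -- p = q
      subst hpq
      rw [Nat.gcd_self]
      exact periodic_mod f p n hp hfp j hj
    · -- q < p : symmetric
      have hg : Nat.gcd (p - q) q = Nat.gcd p q := by
        rw [Nat.gcd_comm, Nat.gcd_sub_self_right (le_of_lt hpq), Nat.gcd_comm]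
      have hgdp : Nat.gcd p q ∣ p := Nat.gcd_dvd_left p q
      have hgdq : Nat.gcd p q ∣ q := Nat.gcd_dvd_right p q
      have hgd : Nat.gcd p q ∣ p - q := Nat.dvd_sub hgdp hgdq
      have hgle : Nat.gcd p q ≤ p - q := Nat.le_of_dvd (by omega) hgd
      have hfp' : ∀ i, i + (p - q) < n - q → f (i + (p - q)) = f i := by
        intro i hi
        have h1 : f (i + (p - q) + q) = f (i + (p - q)) := hfq _ (by omega)
        have h2 : f (i + p) = f i := hfp i (by omega)
        have h3 : i + (p - q) + q = i + p := by omega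
        rw [h3] at h1
        rw [← h1, h2]
      have hfq' : ∀ i, i + q < n - q → f (i + q) = f i := fun i hi => hfq i (by omega)
      have H : ∀ j, j < n - q → f j = f (j % Nat.gcd p q) := by
        have := ih (p - q) q (n - q) f (by omega) (by omega) hq hfp' hfq'
          (by rw [hg]; omega)
        rw [hg] at this; exact this
      have h2q : q ≤ n - q := by omega
      have e1 : f j = f (j % q) := periodic_mod f q n hq hfq j hj
      have e2 : f (j % q) = f (j % q % Nat.gcd p q) :=
        H (j % q) (by have := Nat.mod_lt j hq; omega)
      rw [e1, e2, Nat.mod_mod_of_dvd j hgdq]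

lemma listPow_succ (R : List σ) (k : ℕ) : listPow R (k + 1) = R ++ listPow R k := by
  simp [listPow, List.replicate_succ]

lemma length_listPow (R : List σ) (k : ℕ) : (listPow R k).length = k * R.length := by
  induction k with
  | zero => simp [listPow]
  | succ k ih => rw [listPow_succ, List.length_append, ih]; ring

lemma getElem?_listPow (R : List σ) (k i : ℕ) (h : i < k * R.length) :
    (listPow R k)[i]? = R[i % R.length]? := by
  induction k generalizing i with
  | zero => omega
  | succ k ih =>
    rw [listPow_succ]
    by_cases hi : i < R.length
    · rw [List.getElem?_append_left hi, Nat.mod_eq_of_lt hi]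
    · push_neg at hi
      have hs : (k + 1) * R.length = k * R.length + R.length := by ring
      rw [List.getElem?_append_right hi, ih (i - R.length) (by omega)]
      congr 1
      conv_rhs => rw [show i = (i - R.length) + R.length by omega]
      rw [Nat.add_mod_right]

/-- Fine–Wilf application inside `PeriodicityReduction`. Let `Q` be
primitive with `q = |Q| ≤ e` occurring at position `r` of `P`, let `m` be (at least) the
length of the common prefix of `P[r..)` and `P[r+q..)` with `m ≥ eq`, and suppose a
primitive `Q̂` with `|Q̂| ≤ e` is such that `Q̂^{e+1}` is a prefix of `P[r+q..)`. Then
`|Q̂| = q`. -/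
theorem fine_wilf_application (e : ℕ) (he : 1 ≤ e) (P Q Qh : List σ) (r m : ℕ)
    (hQprim : Primitive Q) (hQocc : seg P r (r + Q.length) = Q) (hq : Q.length ≤ e)
    (hQhprim : Primitive Qh) (hqh : Qh.length ≤ e)
    (hcp : seg P r (r + m) = seg P (r + Q.length) (r + Q.length + m))
    (hin : r + Q.length + m ≤ P.length)
    (hm : e * Q.length ≤ m)
    (hpref : listPow Qh (e + 1) <+: P.drop (r + Q.length)) :
    Qh.length = Q.length := by
  set q := Q.length with hqdef
  set qh := Qh.length with hqhdef
  have hq1 : 0 < q := List.length_pos_iff.mpr hQprim.1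
  have hqh1 : 0 < qh := List.length_pos_iff.mpr hQhprim.1
  -- (A) common-prefix fact
  have hA : ∀ i, i < m → P[r + i]? = P[r + q + i]? := by
    intro i hi
    have := congrArg (fun l => l[i]?) hcp
    simp only [seg] at this
    rw [Nat.add_sub_cancel_left, Nat.add_sub_cancel_left] at this
    rwa [List.getElem?_take, if_pos hi, List.getElem?_take, if_pos hi,
      List.getElem?_drop, List.getElem?_drop] at this
  -- (B) occurrence fact
  have hB : ∀ i, i < q → Q[i]? = P[r + i]? := by
    intro i hi
    have := congrArg (fun l => l[i]?) hQocc
    simp only [seg] at this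
    rw [Nat.add_sub_cancel_left] at this
    rw [List.getElem?_take, if_pos hi, List.getElem?_drop] at this
    exact this.symm
  -- (C) prefix fact
  have hC : ∀ i, i < (e + 1) * qh → P[r + q + i]? = Qh[i % qh]? := by
    intro i hi
    obtain ⟨t, ht⟩ := hpref
    have h1 : (P.drop (r + q))[i]? = (listPow Qh (e + 1))[i]? := by
      rw [← ht, List.getElem?_append_left (by rw [length_listPow]; exact hi)]
    rw [List.getElem?_drop] at h1
    rw [h1, getElem?_listPow _ _ _ hi]
  set f : ℕ → Option σ := fun i => P[r + q + i]? with hf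
  set n := min m ((e + 1) * qh) with hn
  set g := Nat.gcd q qh with hg
  have hgq : g ∣ q := Nat.gcd_dvd_left q qh
  have hgqh : g ∣ qh := Nat.gcd_dvd_right q qh
  have hg1 : 0 < g := Nat.gcd_pos_of_pos_left qh hq1
  have hgleq : g ≤ q := Nat.le_of_dvd hq1 hgq
  have hgleqh : g ≤ qh := Nat.le_of_dvd hqh1 hgqh
  have heq : e + q ≤ e * q + 1 := by nlinarith
  have hE1 : (e + 1) * qh = e * qh + qh := by ring
  have hE2 : e ≤ e * qh := Nat.le_mul_of_pos_right e hqh1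
  have hE3 : q ≤ e * q := Nat.le_mul_of_pos_left q he
  have hqm : q + qh ≤ m + 1 := by omega
  have hqn : q + qh ≤ (e + 1) * qh + 1 := by omega
  have hq_le_n : q ≤ n := by omega
  have hqh_le_n : qh ≤ n := by omega
  have hbound : q + qh - g ≤ n := by omega
  -- periods of f
  have hper_q : ∀ i, i + q < n → f (i + q) = f i := by
    intro i hi
    show P[r + q + (i + q)]? = P[r + q + i]?
    have h1 := hA (i + q) (by omega)
    have h2 : r + (i + q) = r + q + i := by omega
    rw [h2] at h1
    exact h1.symm
  have hper_qh : ∀ i, i + qh < n → f (i + qh) = f i := by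
    intro i hi
    show P[r + q + (i + qh)]? = P[r + q + i]?
    rw [hC (i + qh) (by omega), hC i (by omega), Nat.add_mod_right]
  have HFW : ∀ j, j < n → f j = f (j % g) :=
    fine_wilf_aux (q + qh) q qh n f le_rfl hq1 hqh1 hper_q hper_qh hbound
  -- key pointwise facts
  have hQmod : ∀ i, i < q → Q[i]? = Q[i % g]? := by
    intro i hi
    have him : i < m := by omega
    have hin' : i < n := by omega
    have himg : i % g < q := lt_of_lt_of_le (Nat.mod_lt i hg1) hgleq
    calc Q[i]? = P[r + i]? := hB i hi
      _ = P[r + q + i]? := hA i him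
      _ = f i := rfl
      _ = f (i % g) := HFW i hin'
      _ = P[r + q + (i % g)]? := rfl
      _ = P[r + (i % g)]? := (hA (i % g) (by omega)).symm
      _ = Q[i % g]? := (hB (i % g) himg).symm
  have hQhmod : ∀ i, i < qh → Qh[i]? = Qh[i % g]? := by
    intro i hi
    have h1 : Qh[i]? = f i := by
      rw [show f i = Qh[i % qh]? from hC i (by omega), Nat.mod_eq_of_lt hi]
    have h2 : Qh[i % g]? = f (i % g) := by
      have : i % g < qh := lt_of_lt_of_le (Nat.mod_lt i hg1) hgleqh
      rw [show f (i % g) = Qh[i % g % qh]? from hC (i % g) (by omega),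
        Nat.mod_eq_of_lt this]
    rw [h1, h2]
    exact HFW i (by omega)
  -- from a mod-g structure and primitivity, conclude length = g
  have key : ∀ (W : List σ), Primitive W → 0 < W.length → g ∣ W.length →
      (∀ i, i < W.length → W[i]? = W[i % g]?) → W.length = g := by
    intro W hWprim hW0 hWdvd hWmod
    set w := W.length with hw
    have hglew : g ≤ w := Nat.le_of_dvd hW0 hWdvd
    have hWeq : W = listPow (W.take g) (w / g) := by
      apply List.ext_getElem?
      intro i
      have hlen : (W.take g).length = g := by
        rw [List.length_take]; omega
      by_cases hi : i < w
      · have hikg : i < w / g * (W.take g).length := by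
          rw [hlen, Nat.div_mul_cancel hWdvd]; exact hi
        rw [getElem?_listPow _ _ _ hikg, hlen, List.getElem?_take,
          if_pos (Nat.mod_lt i hg1)]
        exact hWmod i hi
      · push_neg at hi
        rw [List.getElem?_eq_none hi, List.getElem?_eq_none]
        rw [length_listPow, hlen, Nat.div_mul_cancel hWdvd]
        exact hi
    by_contra hne
    have h2 : 2 ≤ w / g := by
      by_contra hlt
      push_neg at hlt
      have h1 : 1 ≤ w / g := Nat.one_le_div_iff hg1 |>.mpr hglew
      have hone : w / g = 1 := by omega
      have hcc := Nat.div_mul_cancel hWdvd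
      rw [hone, one_mul] at hcc
      omega
    exact absurd hWeq (hWprim.2 (W.take g) (w / g) h2)
  have hQg : q = g := key Q hQprim hq1 hgq hQmod
  have hQhg : qh = g := key Qh hQhprim hqh1 hgqh hQhmod
  omega
end

section
/- For every skewmetric weight function w and all x, y ∈ Σ ∪ {ε}, the Dyck edit distance of the two-character string xy satisfies dyck^w(xy) = min over z ∈ T ∪ {ε} of w(x, z) + w(y, z̄). -/
variable {σ : Type*}

/-- Labelled parentheses: `(a, true)` is an opening parenthesis of type `a` (in `T`), and
`(a, false)` is the corresponding closing parenthesis (in `T̄`). -/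
abbrev Par (σ : Type*) := σ × Bool

/-- The complementary parenthesis. -/
def parCompl : Par σ → Par σ := fun p => (p.1, !p.2)

/-- The reverse complement of a string of parentheses. -/
def revComp (S : List (Par σ)) : List (Par σ) := S.reverse.map parCompl

/-- The Dyck language: balanced (well-parenthesized) strings. -/
inductive IsDyck : List (Par σ) → Prop
  | nil : IsDyck ([] : List (Par σ))
  | node (a : σ) {F G : List (Par σ)} :
      IsDyck F → IsDyck G → IsDyck ((a, true) :: F ++ (a, false) :: G)

/-- A skewmetric weight function: a weight function satisfying the triangle inequality
and skew-symmetry `w(a,b) = w(b̄,ā)` (with `ε̄ = ε`). -/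
def Skewmetric (w : Option (Par σ) → Option (Par σ) → ℝ) : Prop :=
  IsWeight w ∧ (∀ a b c, w a c ≤ w a b + w b c) ∧
  ∀ a b, w a b = w (b.map parCompl) (a.map parCompl)

/-- Weighted Dyck edit distance: minimum weighted edit distance to a string in the Dyck
language. -/
noncomputable def dyck (w : Option (Par σ) → Option (Par σ) → ℝ)
    (X : List (Par σ)) : ℝ :=
  sInf {c | ∃ Y : List (Par σ), IsDyck Y ∧ c = ed w X Y}

/-- Weighted Dyck edit distance capped at `k`. -/
noncomputable def dyckK (w : Option (Par σ) → Option (Par σ) → ℝ) (k : ℝ)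
    (X : List (Par σ)) : EReal :=
  if dyck w X ≤ k then ((dyck w X : ℝ) : EReal) else ⊤

/-- The height `H(i)`: number of opening minus closing parentheses in `X[0..i)`. -/
def ht (X : List (Par σ)) (i : ℕ) : ℤ :=
  (((X.take i).countP (fun p => p.2)) : ℤ) - (((X.take i).countP (fun p => !p.2)) : ℤ)

/-- The fragments `X[a..b) ∈ T*` and `X[c..d) ∈ T̄*` are `k`-synchronized: equal lengths,
`b ≤ c`, and `H(b) + H(c) − 2·min_{m ∈ [b..c]} H(m) ≤ 2k`. -/
def KSync (k : ℕ) (X : List (Par σ)) (a b c d : ℕ) : Prop :=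
  a ≤ b ∧ b ≤ c ∧ c ≤ d ∧ d ≤ X.length ∧
  (∀ p ∈ (X.drop a).take (b - a), p.2 = true) ∧
  (∀ p ∈ (X.drop c).take (d - c), p.2 = false) ∧
  b - a = d - c ∧
  ∃ m₀, b ≤ m₀ ∧ m₀ ≤ c ∧ (∀ m, b ≤ m → m ≤ c → ht X m₀ ≤ ht X m) ∧
    ht X b + ht X c - 2 * ht X m₀ ≤ 2 * (k : ℤ)

/-!
An alignment of `xy` onto a Dyck word `Y` matches `x` to some `u` and `y` to some `v`
(letters of `Y`, or `ε`) and inserts the remaining letters of `Y`. If `u v` is a matched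
pair `z z̄` with `z ∈ T`, its cost is at least `w(x, z) + w(y, z̄)`. Otherwise, since `Y` is
balanced and a closing parenthesis is preceded by an opening one of its type, the complements
`ū`, `v̄` are among the inserted letters. Skew-symmetry makes inserting `ū` cost `w(u, ε)`, and
the triangle inequality `w(x, ε) ≤ w(x, u) + w(u, ε)` bounds the cost below by the candidate
`z = ε`.
-/

def insCost (w : Option σ → Option σ → ℝ) (L : List σ) : ℝ :=
  (L.map fun a => w none (some a)).sum

section EditDistance

variable {w : Option σ → Option σ → ℝ}

@[simp] theorem insCost_nil : insCost w [] = 0 := rfl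

@[simp] theorem insCost_cons (a : σ) (L : List σ) :
    insCost w (a :: L) = w none (some a) + insCost w L := by
  simp [insCost]

@[simp] theorem insCost_append (L L' : List σ) :
    insCost w (L ++ L') = insCost w L + insCost w L' := by
  simp [insCost]

theorem insCost_nonneg (hw : ∀ a b, 0 ≤ w a b) (L : List σ) : 0 ≤ insCost w L :=
  List.sum_nonneg (by simp [hw])

theorem insCost_le_of_subperm (hw : ∀ a b, 0 ≤ w a b) {L L' : List σ} (h : L.Subperm L') :
    insCost w L ≤ insCost w L' := by
  obtain ⟨K, hK, hsub⟩ := h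
  rw [insCost, ← (hK.map _).sum_eq]
  exact (hsub.map _).sum_le_sum (by simp [hw])

theorem EdAux.nonneg (hw : ∀ a b, 0 ≤ w a b) {X Y : List σ} {c : ℝ} (h : EdAux w X Y c) :
    0 ≤ c := by
  induction h with
  | nil => rfl
  | del a _ ih => exact add_nonneg (hw _ _) ih
  | ins b _ ih => exact add_nonneg (hw _ _) ih
  | sub a b _ ih => exact add_nonneg (hw _ _) ih

theorem EdAux.exists_cost (X Y : List σ) : ∃ c, EdAux w X Y c := by
  induction X with
  | nil =>
    induction Y with
    | nil => exact ⟨0, .nil⟩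
    | cons b Y ih => exact ⟨_, .ins b ih.choose_spec⟩
  | cons a X ih => exact ⟨_, .del a ih.choose_spec⟩

theorem ed_le (hw : ∀ a b, 0 ≤ w a b) {X Y : List σ} {c : ℝ} (h : EdAux w X Y c) :
    ed w X Y ≤ c :=
  csInf_le ⟨0, fun _ hc => hc.nonneg hw⟩ h

theorem le_ed {X Y : List σ} {b : ℝ} (h : ∀ c, EdAux w X Y c → b ≤ c) : b ≤ ed w X Y :=
  le_csInf (EdAux.exists_cost X Y) h

theorem ed_nonneg (hw : ∀ a b, 0 ≤ w a b) (X Y : List σ) : 0 ≤ ed w X Y :=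
  le_ed fun _ hc => hc.nonneg hw

theorem EdAux.eq_insCost_of_nil {Y : List σ} {c : ℝ} (h : EdAux w [] Y c) :
    c = insCost w Y := by
  generalize hX : ([] : List σ) = X at h
  induction h with
  | nil => rfl
  | del => simp at hX
  | ins b _ ih => simp [ih hX]
  | sub => simp at hX

theorem EdAux.option_append (hw : w none none = 0) (x u : Option σ) {X Y : List σ} {c : ℝ}
    (h : EdAux w X Y c) : EdAux w (x.toList ++ X) (u.toList ++ Y) (w x u + c) := by
  rcases x with _ | a <;> rcases u with _ | b
  · simpa [hw] using h
  · exact .ins b h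
  · exact .del a h
  · exact .sub a b h

theorem EdAux.exists_split_cons {a : σ} {X Y : List σ} {c : ℝ} (h : EdAux w (a :: X) Y c) :
    ∃ (P : List σ) (u : Option σ) (Y' : List σ) (c' : ℝ),
      Y = P ++ u.toList ++ Y' ∧ EdAux w X Y' c' ∧ c = insCost w P + w (some a) u + c' := by
  generalize hX : a :: X = X₀ at h
  induction h with
  | nil => simp at hX
  | @del X₀ Y c a₀ h _ =>
    obtain ⟨rfl, rfl⟩ := List.cons_eq_cons.mp hX
    exact ⟨[], none, Y, c, by simp, h, by simp⟩
  | @ins X₀ Y c b _ ih =>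
    obtain ⟨P, u, Y', c', rfl, h', rfl⟩ := ih hX
    exact ⟨b :: P, u, Y', c', by simp, h', by simp only [insCost_cons]; ring⟩
  | @sub X₀ Y c a₀ b h _ =>
    obtain ⟨rfl, rfl⟩ := List.cons_eq_cons.mp hX
    exact ⟨[], some b, Y, c, by simp, h, by simp⟩

theorem EdAux.exists_split_option_append (hw : w none none = 0) {x : Option σ}
    {X Y : List σ} {c : ℝ} (h : EdAux w (x.toList ++ X) Y c) :
    ∃ (P : List σ) (u : Option σ) (Y' : List σ) (c' : ℝ),
      Y = P ++ u.toList ++ Y' ∧ EdAux w X Y' c' ∧ c = insCost w P + w x u + c' := by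
  rcases x with _ | a
  · exact ⟨[], none, Y, c, by simp, h, by simp [hw]⟩
  · exact h.exists_split_cons

end EditDistance

section Dyck

@[simp] theorem parCompl_parCompl (q : Par σ) : parCompl (parCompl q) = q := by
  simp [parCompl]

@[simp] theorem parCompl_ne (q : Par σ) : parCompl q ≠ q := by
  simp [parCompl, Prod.ext_iff]

@[simp] theorem self_ne_parCompl (q : Par σ) : q ≠ parCompl q := (parCompl_ne q).symm

theorem parCompl_injective : Function.Injective (parCompl : Par σ → Par σ) :=
  Function.LeftInverse.injective parCompl_parCompl

theorem isDyck_pair (a : σ) : IsDyck [(a, true), (a, false)] :=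
  IsDyck.node a (F := []) (G := []) .nil .nil

variable [DecidableEq σ]

theorem IsDyck.count_parCompl {Y : List (Par σ)} (h : IsDyck Y) (q : Par σ) :
    Y.count (parCompl q) = Y.count q := by
  induction h with
  | nil => rfl
  | node a _ _ ihF ihG =>
    rcases q with ⟨s, _ | _⟩ <;> by_cases hs : a = s <;>
      simp_all [parCompl] <;> omega

theorem IsDyck.count_close_le_count_open {A B : List (Par σ)} (h : IsDyck (A ++ B)) (s : σ) :
    A.count (s, false) ≤ A.count (s, true) := by
  generalize hY : A ++ B = Y at h
  induction h generalizing A B with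
  | nil => simp_all
  | @node a F G hF hG ihF ihG =>
    rcases A with _ | ⟨p, A⟩
    · simp
    obtain ⟨rfl, hAB⟩ := List.cons_eq_cons.mp hY
    have hFs : F.count (s, false) = F.count (s, true) := hF.count_parCompl (s, true)
    rcases List.append_eq_append_iff.mp hAB with ⟨F', rfl, -⟩ | ⟨G', rfl, hG'⟩
    · have := ihF (B := F') rfl
      simp only [ne_eq, Prod.mk.injEq, Bool.true_eq_false, and_false, not_false_eq_true,
        List.count_cons_of_ne, List.count_cons, beq_iff_eq, and_true, ge_iff_le]
      split_ifs <;> omega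
    · rcases G' with _ | ⟨q, G'⟩
      · simp only [List.append_nil, ne_eq, Prod.mk.injEq, Bool.true_eq_false, and_false,
          not_false_eq_true, List.count_cons_of_ne, List.count_cons, beq_iff_eq, and_true,
          ge_iff_le]
        split_ifs <;> omega
      · obtain ⟨rfl, rfl⟩ := List.cons_eq_cons.mp hG'
        have := ihG (B := B) rfl
        simp only [ne_eq, Prod.mk.injEq, Bool.true_eq_false, and_false, not_false_eq_true,
          List.count_cons_of_ne, List.count_append, List.count_cons, beq_iff_eq, and_true,
          Bool.false_eq_true, ge_iff_le]
        split_ifs <;> omega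

theorem IsDyck.count_open_pos_of_close {A B : List (Par σ)} {s : σ}
    (h : IsDyck (A ++ (s, false) :: B)) : 0 < A.count (s, true) := by
  have := (show IsDyck ((A ++ [(s, false)]) ++ B) by simpa using h).count_close_le_count_open s
  simp only [List.count_append, List.count_singleton, beq_iff_eq, Prod.mk.injEq, true_and,
    Bool.false_eq_true, if_true, if_false] at this
  omega

theorem IsDyck.map_parCompl_subperm {P Q R : List (Par σ)} {u v : Option (Par σ)}
    (hY : IsDyck (P ++ u.toList ++ (Q ++ v.toList ++ R)))
    (huv : ¬ ∃ s, u = some (s, true) ∧ v = some (s, false)) :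
    ((u.toList ++ v.toList).map parCompl).Subperm (P ++ Q ++ R) := by
  rw [List.subperm_ext_iff]
  rintro _ hq
  obtain ⟨r, hr, rfl⟩ := List.mem_map.mp hq
  rw [List.count_map_of_injective _ _ parCompl_injective]
  have hbal : (P ++ Q ++ R).count (parCompl r) + u.toList.count (parCompl r) +
      v.toList.count (parCompl r) =
        (P ++ Q ++ R).count r + u.toList.count r + v.toList.count r := by
    have := hY.count_parCompl r
    simp only [List.count_append] at this ⊢
    omega
  rcases u with _ | b <;> rcases v with _ | b' <;>
    simp only [Option.toList_some, Option.toList_none, List.nil_append, List.singleton_append,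
      List.mem_cons, List.not_mem_nil, or_false] at hr
  · subst hr
    simp only [Option.toList_some, Option.toList_none, List.count_singleton, List.count_nil,
      beq_iff_eq, self_ne_parCompl, if_true, if_false, List.nil_append] at hbal ⊢
    omega
  · subst hr
    simp only [Option.toList_some, Option.toList_none, List.count_singleton, List.count_nil,
      beq_iff_eq, self_ne_parCompl, if_true, if_false, List.append_nil] at hbal ⊢
    omega
  obtain rfl | hne := eq_or_ne b' (parCompl b)
  · -- `b` must be a closing parenthesis, and the opening one it needs lies in `P`
    obtain ⟨s, _ | _⟩ := b
    swap
    · exact absurd ⟨s, rfl, rfl⟩ huv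
    have hopen := (show IsDyck (P ++ (s, false) :: (Q ++ (s, true) :: R)) by
      simpa [parCompl] using hY).count_open_pos_of_close
    rcases hr with rfl | rfl <;>
      simp only [parCompl, Bool.not_false, Bool.not_true, Option.toList_some, List.count_cons,
        List.count_nil, List.count_append, beq_iff_eq, Prod.mk.injEq, true_and, Bool.false_eq_true,
        Bool.true_eq_false, if_true, if_false, List.singleton_append] at hbal hopen ⊢ <;>
      omega
  · have hne' : b ≠ parCompl b' := fun h => hne (by rw [h, parCompl_parCompl])
    rcases hr with rfl | rfl <;>
      simp only [Option.toList_some, List.count_cons, List.count_nil, beq_iff_eq,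
        self_ne_parCompl, hne, hne', if_true, if_false, List.singleton_append] at hbal ⊢ <;>
      split_ifs at hbal ⊢ <;> omega

end Dyck

theorem dyck_le {w : Option (Par σ) → Option (Par σ) → ℝ} (hw : ∀ a b, 0 ≤ w a b)
    {X Y : List (Par σ)} (hY : IsDyck Y) : dyck w X ≤ ed w X Y :=
  csInf_le ⟨0, by rintro _ ⟨Y, -, rfl⟩; exact ed_nonneg hw X Y⟩ ⟨Y, hY, rfl⟩

theorem le_dyck {w : Option (Par σ) → Option (Par σ) → ℝ} {X : List (Par σ)} {b : ℝ}
    (h : ∀ Y, IsDyck Y → b ≤ ed w X Y) : b ≤ dyck w X :=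
  le_csInf ⟨_, [], .nil, rfl⟩ (by rintro _ ⟨Y, hY, rfl⟩; exact h Y hY)

section Skewmetric

variable {w : Option (Par σ) → Option (Par σ) → ℝ}

theorem Skewmetric.apply_none (hw : Skewmetric w) (u : Option (Par σ)) :
    w u none = insCost w (u.toList.map parCompl) := by
  rcases u with _ | b
  · simp [hw.1.2]
  · simpa using hw.2.2 (some b) none

theorem Skewmetric.exists_le_of_edAux (hw : Skewmetric w) {x y : Option (Par σ)}
    {Y : List (Par σ)} {c : ℝ} (hY : IsDyck Y) (h : EdAux w (x.toList ++ y.toList) Y c) :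
    ∃ z : Option (Par σ), (z = none ∨ ∃ a : σ, z = some (a, true)) ∧
      w x z + w y (z.map parCompl) ≤ c := by
  classical
  have hw₀ : w none none = 0 := hw.1.2 none
  obtain ⟨P, u, Y₁, c₁, rfl, h₁, rfl⟩ := h.exists_split_option_append hw₀
  rw [← List.append_nil y.toList] at h₁
  obtain ⟨Q, v, R, c₂, rfl, h₂, rfl⟩ := h₁.exists_split_option_append hw₀
  rw [h₂.eq_insCost_of_nil]
  have hP := insCost_nonneg hw.1.1 P
  have hQ := insCost_nonneg hw.1.1 Q
  have hR := insCost_nonneg hw.1.1 R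
  by_cases huv : ∃ s, u = some (s, true) ∧ v = some (s, false)
  · obtain ⟨s, rfl, rfl⟩ := huv
    refine ⟨some (s, true), .inr ⟨s, rfl⟩, ?_⟩
    simp only [Option.map_some, parCompl, Bool.not_true]
    linarith
  · refine ⟨none, .inl rfl, ?_⟩
    have hsub := insCost_le_of_subperm hw.1.1 (hY.map_parCompl_subperm huv)
    rw [List.map_append, insCost_append, ← hw.apply_none, ← hw.apply_none] at hsub
    simp only [insCost_append] at hsub
    rw [Option.map_none]
    linarith [hw.2.1 x u none, hw.2.1 y v none]

end Skewmetric

/-- For every skewmetric weight function `w` and all `x, y ∈ Σ ∪ {ε}`,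
`dyck^w(xy) = min_{z ∈ T ∪ {ε}} (w(x, z) + w(y, z̄))`. -/
theorem dyck_pair (w : Option (Par σ) → Option (Par σ) → ℝ) (hw : Skewmetric w)
    (x y : Option (Par σ)) :
    dyck w (x.toList ++ y.toList) =
      sInf {c | ∃ z : Option (Par σ),
        (z = none ∨ ∃ a : σ, z = some (a, true)) ∧
        c = w x z + w y (z.map parCompl)} := by
  have hbdd : BddBelow {c | ∃ z : Option (Par σ),
      (z = none ∨ ∃ a : σ, z = some (a, true)) ∧ c = w x z + w y (z.map parCompl)} :=
    ⟨0, by rintro _ ⟨z, -, rfl⟩; exact add_nonneg (hw.1.1 _ _) (hw.1.1 _ _)⟩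
  apply le_antisymm
  · refine le_csInf ⟨_, none, .inl rfl, rfl⟩ ?_
    rintro _ ⟨z, hz, rfl⟩
    have hzDyck : IsDyck (z.toList ++ (z.map parCompl).toList) := by
      rcases hz with rfl | ⟨a, rfl⟩
      exacts [.nil, isDyck_pair a]
    have hcost := (EdAux.nil.option_append (hw.1.2 none) y (z.map parCompl)).option_append
      (hw.1.2 none) x z
    simp only [List.append_nil, add_zero] at hcost
    exact (dyck_le hw.1.1 hzDyck).trans (ed_le hw.1.1 hcost)
  · refine le_dyck fun Y hY => le_ed fun c hc => ?_
    obtain ⟨z, hz, hle⟩ := hw.exists_le_of_edAux hY hc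
    exact (csInf_le hbdd ⟨z, hz, rfl⟩).trans hle
end
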